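/- For every fixed integer k ≥ 0, the ratio γ_k(z) of consecutive generation densities satisfies z · γ_k(z) → 2(k+1)/B as z → ∞; that is, γ_k(z) ∼ 2(k+1)/(Bz) far from the origin (downward deviation from self-similarity). -/

import Mathlib

open Real MeasureTheory Set Filter Topology

/-- The steady-state generation-`k` density in the normalized distance
`z = |x|√(λ/D)` from the origin:
`𝒜_k(z) = (μ(λB)^k/(k!(4πD)^{n/2})) ∫₀^∞ s^{k−n/2} exp(−λs − z²/(4λs)) ds`. -/
noncomputable def steadyDensity (n : ℕ) (lam D B mu : ℝ) (k : ℕ) (z : ℝ) : ℝ :=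
  (mu * (lam * B) ^ k / ((Nat.factorial k : ℝ) * (4 * π * D) ^ ((n : ℝ) / 2))) *
    ∫ s in Set.Ioi (0:ℝ),
      s ^ ((k : ℝ) - (n : ℝ) / 2) * Real.exp (-lam * s - z ^ 2 / (4 * lam * s))

/-- The consecutive-generation ratio `γ_k(z) = 𝒜_k(z)/𝒜_{k+1}(z)`. -/
noncomputable def genRatio (n : ℕ) (lam D B mu : ℝ) (k : ℕ) (z : ℝ) : ℝ :=
  steadyDensity n lam D B mu k z / steadyDensity n lam D B mu (k + 1) z

/-!
Up to a constant factor, `𝒜_k(z)` is `I_ν(b) = ∫₀^∞ s^ν exp(-λs - b/s) ds` with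
`ν = k - n/2` and `b = z²/(4λ)` (a modified Bessel function `K_{ν+1}` in disguise), so
`γ_k(z) = (k+1)/(λB) · I_ν(b)/I_{ν+1}(b)`. Integration by parts gives the three-term
recurrence `λ I_{ν+1} = (ν+1) I_ν + b I_{ν-1}`, and Cauchy–Schwarz gives log-convexity
`I_ν² ≤ I_{ν-1} I_{ν+1}`. Together they trap `r = I_ν/I_{ν+1}` between two quadratics,
`(ν+1) r + b r² ≤ λ ≤ (ν+2) r + b r²`; as `b r² = (z r)²/(4λ)`, this forces
`z r = 2λ + O(1/z)`.
-/

noncomputable def gigKernel (ν a b s : ℝ) : ℝ := s ^ ν * exp (-(a * s) - b / s)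

noncomputable def gigIntegral (ν a b : ℝ) : ℝ := ∫ s in Ioi 0, gigKernel ν a b s

section
variable {ν a b : ℝ}

lemma gigKernel_pos {s : ℝ} (hs : 0 < s) : 0 < gigKernel ν a b s :=
  mul_pos (rpow_pos_of_pos hs ν) (exp_pos _)

lemma continuousOn_gigKernel (ν a b : ℝ) : ContinuousOn (gigKernel ν a b) (Ioi 0) := by
  intro s (hs : 0 < s)
  unfold gigKernel
  exact ContinuousAt.continuousWithinAt
    (by fun_prop (disch := first | exact hs.ne' | exact Or.inl hs.ne'))

lemma gigKernel_eq_exp_mul (s : ℝ) :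
    gigKernel ν a b s = exp (-(a * s)) * (s ^ ν * exp (-(b / s))) := by
  rw [gigKernel, sub_eq_add_neg, exp_add]
  ring

lemma tendsto_gigKernel_nhdsGT_zero (ν a : ℝ) (hb : 0 < b) :
    Tendsto (gigKernel ν a b) (𝓝[>] 0) (𝓝 0) := by
  have hpow : Tendsto (fun s : ℝ => s ^ ν * exp (-(b / s))) (𝓝[>] 0) (𝓝 0) := by
    refine ((tendsto_rpow_mul_exp_neg_mul_atTop_nhds_zero (-ν) b hb).comp
      tendsto_inv_nhdsGT_zero).congr' ?_
    filter_upwards [self_mem_nhdsWithin] with s (hs : 0 < s)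
    simp [inv_rpow hs.le, rpow_neg hs.le, div_eq_mul_inv]
  have hexp : Tendsto (fun s : ℝ => exp (-(a * s))) (𝓝[>] 0) (𝓝 1) :=
    tendsto_nhdsWithin_of_tendsto_nhds ((by fun_prop : Continuous _).tendsto' 0 1 (by simp))
  simpa [← gigKernel_eq_exp_mul] using hexp.mul hpow

lemma tendsto_gigKernel_atTop (ν b : ℝ) (ha : 0 < a) :
    Tendsto (gigKernel ν a b) atTop (𝓝 0) := by
  have hexp : Tendsto (fun s : ℝ => exp (-(b / s))) atTop (𝓝 1) := by
    have h0 : Tendsto (fun s : ℝ => -(b / s)) atTop (𝓝 0) := by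
      simpa using ((tendsto_const_nhds (x := b)).div_atTop (tendsto_id (α := ℝ))).neg
    rw [← exp_zero]
    exact (continuous_exp.tendsto 0).comp h0
  have h := (tendsto_rpow_mul_exp_neg_mul_atTop_nhds_zero ν a ha).mul hexp
  rw [zero_mul] at h
  refine h.congr fun s => ?_
  rw [gigKernel_eq_exp_mul, neg_mul]
  ring

lemma gigKernel_eq_mul_exp (s : ℝ) :
    gigKernel ν a b s = gigKernel ν (a / 2) b s * exp (-(a / 2) * s) := by
  simp only [gigKernel, mul_assoc, ← exp_add]
  ring_nf

lemma integrableOn_gigKernel (ν : ℝ) (ha : 0 < a) (hb : 0 < b) :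
    IntegrableOn (gigKernel ν a b) (Ioi 0) := by
  rw [← Ioc_union_Ioi_eq_Ioi zero_le_one]
  refine IntegrableOn.union ?_ ?_
  · set g := Function.update (gigKernel ν a b) 0 0
    have hg : ContinuousOn g (Icc 0 1) := by
      intro s hs
      rcases hs.1.eq_or_lt with rfl | hs0
      · refine continuousWithinAt_update_same.mpr
          ((tendsto_gigKernel_nhdsGT_zero ν a hb).mono_left (nhdsWithin_mono _ ?_))
        rintro x ⟨hx, hx0⟩
        exact lt_of_le_of_ne hx.1 (Ne.symm hx0)
      · refine ((continuousOn_gigKernel ν a b s hs0).continuousAt (Ioi_mem_nhds hs0)).congr ?_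
          |>.continuousWithinAt
        filter_upwards [eventually_ne_nhds hs0.ne'] with x hx
        exact (Function.update_of_ne hx _ _).symm
    exact (hg.integrableOn_Icc.mono_set Ioc_subset_Icc_self).congr_fun
      (fun s hs => Function.update_of_ne hs.1.ne' _ _) measurableSet_Ioc
  · refine integrable_of_isBigO_exp_neg (half_pos ha)
      ((continuousOn_gigKernel ν a b).mono fun s (hs : 1 ≤ s) => zero_lt_one.trans_le hs) ?_
    have h := ((tendsto_gigKernel_atTop ν b (half_pos ha)).isBigO_one ℝ).mul
      (Asymptotics.isBigO_refl (fun s => exp (-(a / 2) * s)) atTop)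
    simpa only [one_mul, ← gigKernel_eq_mul_exp] using h

lemma gigIntegral_pos (ν : ℝ) (ha : 0 < a) (hb : 0 < b) : 0 < gigIntegral ν a b := by
  rw [gigIntegral, setIntegral_pos_iff_support_of_nonneg_ae
    (ae_restrict_of_forall_mem measurableSet_Ioi fun s hs => (gigKernel_pos hs).le)
    (integrableOn_gigKernel ν ha hb)]
  have hsupp : Ioi 0 ⊆ Function.support (gigKernel ν a b) := fun s hs => (gigKernel_pos hs).ne'
  simp [inter_eq_self_of_subset_right hsupp]

lemma hasDerivAt_exp_neg_mul_sub_div {s : ℝ} (hs : s ≠ 0) :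
    HasDerivAt (fun s => exp (-(a * s) - b / s))
      (exp (-(a * s) - b / s) * (-a + b / s ^ 2)) s := by
  have h := (((hasDerivAt_id s).const_mul a).neg.sub ((hasDerivAt_inv hs).const_mul b)).exp
  convert h using 1
  · ext x; simp [div_eq_mul_inv]
  · simp [div_eq_mul_inv]

lemma gigIntegral_recurrence (ν : ℝ) (ha : 0 < a) (hb : 0 < b) :
    a * gigIntegral (ν + 1) a b
      = (ν + 1) * gigIntegral ν a b + b * gigIntegral (ν - 1) a b := by
  have hint (μ : ℝ) := integrableOn_gigKernel μ ha hb
  have hderiv : ∀ s ∈ Ioi (0 : ℝ),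
      (ν + 1) * s ^ ν * exp (-(a * s) - b / s)
        + s ^ (ν + 1) * (exp (-(a * s) - b / s) * (-a + b / s ^ 2))
      = (ν + 1) * gigKernel ν a b s + b * gigKernel (ν - 1) a b s
        - a * gigKernel (ν + 1) a b s := by
    intro s (hs : 0 < s)
    simp only [gigKernel, rpow_add_one hs.ne', rpow_sub_one hs.ne']
    field_simp
    ring
  have hibp := integral_Ioi_deriv_mul_eq_sub (a := 0) (a' := 0) (b' := 0)
    (u := fun s => s ^ (ν + 1)) (v := fun s => exp (-(a * s) - b / s))
    (fun s (hs : 0 < s) => by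
      simpa using hasDerivAt_rpow_const (p := ν + 1) (Or.inl hs.ne'))
    (fun s (hs : 0 < s) => hasDerivAt_exp_neg_mul_sub_div hs.ne')
    (by
      refine IntegrableOn.congr_fun ?_ (fun s hs => (hderiv s hs).symm) measurableSet_Ioi
      exact (((hint ν).const_mul _).add ((hint _).const_mul _)).sub ((hint _).const_mul _))
    (tendsto_gigKernel_nhdsGT_zero (ν + 1) a hb) (tendsto_gigKernel_atTop (ν + 1) b ha)
  rw [setIntegral_congr_fun measurableSet_Ioi hderiv, integral_sub, integral_add,
    integral_const_mul, integral_const_mul, integral_const_mul] at hibp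
  · simp only [gigIntegral]
    linarith
  all_goals first
    | exact (hint _).const_mul _
    | exact ((hint _).const_mul _).add ((hint _).const_mul _)

lemma gigIntegral_sq_le_mul (ν : ℝ) (ha : 0 < a) (hb : 0 < b) :
    gigIntegral ν a b ^ 2 ≤ gigIntegral (ν - 1) a b * gigIntegral (ν + 1) a b := by
  have hint (μ : ℝ) := integrableOn_gigKernel μ ha hb
  have hquad (x : ℝ) : 0 ≤ gigIntegral (ν - 1) a b * (x * x) + 2 * gigIntegral ν a b * x
      + gigIntegral (ν + 1) a b := by
    have hpt : ∀ s ∈ Ioi (0 : ℝ), gigKernel (ν - 1) a b s * (x + s) ^ 2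
        = x * x * gigKernel (ν - 1) a b s + 2 * x * gigKernel ν a b s
          + gigKernel (ν + 1) a b s := by
      intro s (hs : 0 < s)
      simp only [gigKernel, rpow_add_one hs.ne', rpow_sub_one hs.ne']
      field_simp
      ring
    have h := setIntegral_nonneg (μ := volume) measurableSet_Ioi fun s (hs : 0 < s) =>
      mul_nonneg (gigKernel_pos (ν := ν - 1) (a := a) (b := b) hs).le (sq_nonneg (x + s))
    rw [setIntegral_congr_fun measurableSet_Ioi hpt, integral_add, integral_add,
      integral_const_mul, integral_const_mul] at h
    · simp only [gigIntegral]
      linarith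
    all_goals first
      | exact hint _
      | exact (hint _).const_mul _
      | exact ((hint _).const_mul _).add ((hint _).const_mul _)
  have h := discrim_le_zero hquad
  rw [discrim] at h
  linarith

lemma gigIntegral_ratio_bounds (ν : ℝ) (ha : 0 < a) (hb : 0 < b) :
    (ν + 1) * (gigIntegral ν a b / gigIntegral (ν + 1) a b)
        + b * (gigIntegral ν a b / gigIntegral (ν + 1) a b) ^ 2 ≤ a ∧
      a ≤ (ν + 2) * (gigIntegral ν a b / gigIntegral (ν + 1) a b)
        + b * (gigIntegral ν a b / gigIntegral (ν + 1) a b) ^ 2 := by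
  have hI (μ : ℝ) := gigIntegral_pos μ ha hb
  have hrec₀ := gigIntegral_recurrence ν ha hb
  have hrec₁ := gigIntegral_recurrence (ν + 1) ha hb
  have hlc₀ := gigIntegral_sq_le_mul ν ha hb
  have hlc₁ := gigIntegral_sq_le_mul (ν + 1) ha hb
  rw [add_sub_cancel_right, add_assoc, one_add_one_eq_two] at hrec₁ hlc₁
  set r := gigIntegral ν a b / gigIntegral (ν + 1) a b
  have hr : gigIntegral ν a b = r * gigIntegral (ν + 1) a b :=
    (div_mul_cancel₀ _ (hI (ν + 1)).ne').symm
  rw [hr] at hrec₀ hrec₁ hlc₀ hlc₁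
  constructor
  · have hlc : r ^ 2 * gigIntegral (ν + 1) a b ≤ gigIntegral (ν - 1) a b := by
      nlinarith [hI (ν + 1)]
    refine le_of_mul_le_mul_right ?_ (hI (ν + 1))
    nlinarith [mul_le_mul_of_nonneg_left hlc hb.le]
  · have hlc : gigIntegral (ν + 1) a b ≤ r * gigIntegral (ν + 2) a b := by
      nlinarith [hI (ν + 1)]
    refine le_of_mul_le_mul_right ?_ (hI (ν + 1))
    nlinarith [mul_le_mul_of_nonneg_left hlc ha.le, congrArg (r * ·) hrec₁]

end

lemma abs_sub_le_of_sq_bounds {w c e : ℝ} (hw : 0 ≤ w) (hc : 0 < c)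
    (h₁ : w ^ 2 - e * w ≤ c ^ 2) (h₂ : c ^ 2 ≤ w ^ 2 + e * w) : |w - c| ≤ e := by
  have hw₀ : 0 < w := by
    rcases hw.eq_or_lt with rfl | hw₀
    · nlinarith
    · exact hw₀
  have he : 0 ≤ e := nonneg_of_mul_nonneg_left (by linarith) hw₀
  rw [abs_sub_le_iff]
  constructor <;> nlinarith [mul_nonneg he hc.le]

lemma tendsto_mul_gigIntegral_ratio (ν : ℝ) {a : ℝ} (ha : 0 < a) :
    Tendsto (fun z => z * (gigIntegral ν a (z ^ 2 / (4 * a))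
      / gigIntegral (ν + 1) a (z ^ 2 / (4 * a)))) atTop (𝓝 (2 * a)) := by
  set C := 4 * a * (|ν + 1| + |ν + 2|)
  have hbound : ∀ᶠ z in atTop, ‖z * (gigIntegral ν a (z ^ 2 / (4 * a))
      / gigIntegral (ν + 1) a (z ^ 2 / (4 * a))) - 2 * a‖ ≤ C / z := by
    filter_upwards [eventually_gt_atTop 0] with z hz
    have hb : 0 < z ^ 2 / (4 * a) := by positivity
    obtain ⟨hlow, hupp⟩ := gigIntegral_ratio_bounds ν ha hb
    set r := gigIntegral ν a (z ^ 2 / (4 * a)) / gigIntegral (ν + 1) a (z ^ 2 / (4 * a))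
    have hr₀ : 0 < r := div_pos (gigIntegral_pos ν ha hb) (gigIntegral_pos (ν + 1) ha hb)
    have hr : 0 < 4 * a * r := by positivity
    have hw : 4 * a * (z ^ 2 / (4 * a) * r ^ 2) = (z * r) ^ 2 := by field_simp
    have hlow' := mul_le_mul_of_nonneg_left hlow (by positivity : (0 : ℝ) ≤ 4 * a)
    have hupp' := mul_le_mul_of_nonneg_left hupp (by positivity : (0 : ℝ) ≤ 4 * a)
    rw [mul_add, hw] at hlow' hupp'
    have he : C / z * (z * r) = C * r := by field_simp
    rw [Real.norm_eq_abs]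
    refine abs_sub_le_of_sq_bounds (by positivity) (by positivity) ?_ ?_ <;> rw [he]
    · nlinarith [mul_le_mul_of_nonneg_left (neg_abs_le (ν + 1)) hr.le,
        mul_nonneg hr.le (abs_nonneg (ν + 2))]
    · nlinarith [mul_le_mul_of_nonneg_left (le_abs_self (ν + 2)) hr.le,
        mul_nonneg hr.le (abs_nonneg (ν + 1))]
  rw [tendsto_iff_norm_sub_tendsto_zero]
  exact squeeze_zero' (Eventually.of_forall fun _ => norm_nonneg _) hbound
    (tendsto_const_nhds.div_atTop tendsto_id)

lemma steadyDensity_eq_mul_gigIntegral (n : ℕ) (lam D B mu : ℝ) (k : ℕ) (z : ℝ) :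
    steadyDensity n lam D B mu k z
      = mu * (lam * B) ^ k / ((k.factorial : ℝ) * (4 * π * D) ^ ((n : ℝ) / 2))
        * gigIntegral ((k : ℝ) - n / 2) lam (z ^ 2 / (4 * lam)) := by
  simp only [steadyDensity, gigIntegral, gigKernel, neg_mul, div_div]

lemma genRatio_eq_mul_gigIntegral_ratio (n : ℕ) {lam D B mu : ℝ} (hlam : lam ≠ 0) (hD : 0 < D)
    (hB : B ≠ 0) (hmu : mu ≠ 0) (k : ℕ) (z : ℝ) :
    genRatio n lam D B mu k z = ((k : ℝ) + 1) / (lam * B)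
      * (gigIntegral ((k : ℝ) - n / 2) lam (z ^ 2 / (4 * lam))
        / gigIntegral ((k : ℝ) - n / 2 + 1) lam (z ^ 2 / (4 * lam))) := by
  rw [genRatio, steadyDensity_eq_mul_gigIntegral, steadyDensity_eq_mul_gigIntegral,
    mul_div_mul_comm, Nat.cast_succ, add_sub_right_comm]
  congr 1
  have hD' : (4 * π * D) ^ ((n : ℝ) / 2) ≠ 0 := (rpow_pos_of_pos (by positivity) _).ne'
  rw [Nat.factorial_succ, Nat.cast_mul, Nat.cast_succ, pow_succ]
  field_simp

theorem genRatio_far_from_origin_general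
    (n : ℕ) (lam D B mu : ℝ)
    (hlam : 0 < lam) (hD : 0 < D) (hB : 0 < B) (hmu : 0 < mu) (k : ℕ) :
    Filter.Tendsto (fun z : ℝ => z * genRatio n lam D B mu k z) atTop
      (nhds (2 * ((k : ℝ) + 1) / B)) := by
  have h := (tendsto_mul_gigIntegral_ratio ((k : ℝ) - n / 2) hlam).const_mul
    (((k : ℝ) + 1) / (lam * B))
  rw [show ((k : ℝ) + 1) / (lam * B) * (2 * lam) = 2 * ((k : ℝ) + 1) / B by field_simp] at h
  refine h.congr fun z => ?_
  rw [genRatio_eq_mul_gigIntegral_ratio n hlam.ne' hD hB.ne' hmu.ne']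
  ring

/-- Downward deviation far from the origin: for fixed `k`,
`z γ_k(z) → 2(k+1)/B` as `z → ∞`, i.e. `γ_k(z) ∼ 2(k+1)/(Bz)`. -/
theorem genRatio_far_from_origin
    (n : ℕ) (hn : 1 ≤ n) (lam D B mu : ℝ)
    (hlam : 0 < lam) (hD : 0 < D) (hB : 0 < B) (hmu : 0 < mu) (k : ℕ) :
    Filter.Tendsto (fun z : ℝ => z * genRatio n lam D B mu k z) atTop
      (nhds (2 * ((k : ℝ) + 1) / B)) :=
  genRatio_far_from_origin_general n lam D B mu hlam hD hB hmu k
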